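/- Let p ≥ 3 be an odd integer, set e_p := exp(2πi/p) and e_p^w := exp(2πi w/p) for w ∈ ℂ. Then for every λ ∈ ℂ and all complex numbers a_0, a_1, …, a_{p−1}: Σ_{m=0}^{p−1} a_m · Σ_{n=0}^{p−1} ( e_p^{λ+2n+1} + e_p^{−(λ+2n+1)} − 2 ) · σ_m( e_p^{λ+2n+1}, e_p ) = −2p · Σ_{m=0}^{(p−3)/2} (−1)^m a_m [2m+1 choose m]_{e_p} e_p^{−m(m+1)/2} + p · a_{p−1} · ( exp(2πiλ) + exp(−2πiλ) − 2 ). -/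

import Mathlib

/-- `e_p := exp(2πi/p)`. -/
noncomputable def ep (p : ℕ) : ℂ :=
  Complex.exp (2 * Real.pi * Complex.I / p)

/-- `e_p^w := exp(2πi w / p)`. -/
noncomputable def epow (p : ℕ) (w : ℂ) : ℂ :=
  Complex.exp (2 * Real.pi * Complex.I * w / p)

/-- `σ_m(x,ζ) = ∏_{i=1}^{m} (x + x⁻¹ − ζ^i − ζ^{−i})`. -/
noncomputable def sigma' (m : ℕ) (x ζ : ℂ) : ℂ :=
  ∏ i ∈ Finset.Icc 1 m, (x + x⁻¹ - ζ ^ i - (ζ ^ i)⁻¹)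

/-- Evaluation at `ζ : ℂ` of the Gaussian binomial coefficient `[n choose k]_q ∈ ℤ[q]`,
defined by the `q`-Pascal recursion, agreeing with
`∏_{i=1}^{k} (1−q^{n−k+i})/(1−q^i)` for `k ≤ n` and with `0` for `k > n`. -/
def qbinom : ℕ → ℕ → ℂ → ℂ
  | _, 0, _ => 1
  | 0, _ + 1, _ => 0
  | n + 1, k + 1, ζ => qbinom n k ζ + ζ ^ (k + 1) * qbinom n (k + 1) ζ

/-!
Write `x + x⁻¹ - ζ ^ i - ζ ^ (-i) = x (1 - ζ ^ (m + i) t) (1 - ζ ^ (m - i) t)` with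
`t = (ζ ^ m x)⁻¹`. Then `(x + x⁻¹ - 2) σ_m(x, ζ) = x ^ m (x - 1) ∏_{j ≤ 2m} (1 - ζ ^ j t)`, and the
`q`-binomial theorem expands it as a Laurent polynomial in `x` with exponents in `[-m-1, m+1]`.
Since `p` is odd, the points `e_p^{λ+2n+1} = e_p^{λ+1} (e_p²)^n`, `n < p`, form a full orbit
of the `p`-th roots of unity, and summing over it kills every monomial `x ^ d` with `p ∤ d`.
For `m < p - 1` only `d = 0` survives, and the symmetry `[2m+1 choose m+1] = [2m+1 choose m]` gives
`-2p` times the `m`-th term. For `m = p - 1` the monomials `x ^ (±p)` survive as well and give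
`exp (±2πiλ)`, while `[2p-1 choose p-1]_{e_p} = 1`. Finally `[2m+1 choose m]_{e_p} = 0` for
`(p-1)/2 ≤ m ≤ p-2`, because its numerator contains the factor `1 - e_p ^ p`.
-/

open Finset

section QBinomial

variable (q : ℂ)

theorem qbinom_zero_right (n : ℕ) : qbinom n 0 q = 1 := by
  cases n <;> rfl

theorem qbinom_succ_succ (n k : ℕ) :
    qbinom (n + 1) (k + 1) q = qbinom n k q + q ^ (k + 1) * qbinom n (k + 1) q := rfl

theorem qbinom_eq_zero_of_lt {n k : ℕ} (h : n < k) : qbinom n k q = 0 := by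
  induction n generalizing k with
  | zero => obtain ⟨k, rfl⟩ := Nat.exists_eq_add_one.mpr h; rfl
  | succ n ih =>
    obtain ⟨k, rfl⟩ := Nat.exists_eq_add_one.mpr (Nat.zero_lt_of_lt h)
    rw [qbinom_succ_succ, ih (by omega), ih (by omega), mul_zero, add_zero]

theorem qbinom_self (n : ℕ) : qbinom n n q = 1 := by
  induction n with
  | zero => rfl
  | succ n ih =>
    rw [qbinom_succ_succ, ih, qbinom_eq_zero_of_lt q n.lt_succ_self, mul_zero, add_zero]

theorem qbinom_add_succ_succ' (a b : ℕ) :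
    qbinom (a + b + 1) (b + 1) q = qbinom (a + b) (b + 1) q + q ^ a * qbinom (a + b) b q := by
  induction a generalizing b with
  | zero => simp [qbinom_self, qbinom_eq_zero_of_lt]
  | succ a iha =>
    induction b with
    | zero =>
      have h1 := qbinom_succ_succ q (a + 1) 0
      have h2 := qbinom_succ_succ q a 0
      have h3 := iha 0
      simp only [add_zero, zero_add, qbinom_zero_right, mul_one, pow_one] at h1 h2 h3 ⊢
      linear_combination h1 + q * h3 - h2
    | succ b ihb =>
      have h1 := iha (b + 1)
      rw [show a + (b + 1) = a + 1 + b by ring] at h1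
      rw [show a + 1 + (b + 1) = a + 1 + b + 1 by ring]
      linear_combination qbinom_succ_succ q (a + 1 + b + 1) (b + 1) + ihb +
        q ^ (b + 2) * h1 - qbinom_succ_succ q (a + 1 + b) (b + 1) -
        q ^ (a + 1) * qbinom_succ_succ q (a + 1 + b) b

theorem qbinom_succ_succ' (n k : ℕ) :
    qbinom (n + 1) (k + 1) q = qbinom n (k + 1) q + q ^ (n - k) * qbinom n k q := by
  rcases le_or_gt k n with h | h
  · obtain ⟨a, rfl⟩ := Nat.exists_eq_add_of_le' h
    simpa using qbinom_add_succ_succ' q a k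
  · simp [qbinom_eq_zero_of_lt q h, qbinom_eq_zero_of_lt q (Nat.succ_lt_succ h),
      qbinom_eq_zero_of_lt q (h.trans k.lt_succ_self)]

theorem qbinom_symm {n k : ℕ} (h : k ≤ n) : qbinom n (n - k) q = qbinom n k q := by
  induction n generalizing k with
  | zero => obtain rfl := Nat.le_zero.mp h; rfl
  | succ n ih =>
    rcases k with _ | k
    · rw [Nat.sub_zero, qbinom_self, qbinom_zero_right]
    rcases (Nat.le_of_succ_le_succ h).eq_or_lt with rfl | hk
    · rw [Nat.sub_self, qbinom_self, qbinom_zero_right]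
    obtain ⟨d, hd⟩ : ∃ d, n - k = d + 1 := Nat.exists_eq_add_one.mpr (by omega)
    rw [Nat.add_sub_add_right, hd, qbinom_succ_succ, qbinom_succ_succ' q n k, ← hd, ih hk.le,
      show d = n - (k + 1) by omega, ih hk]

theorem one_sub_pow_mul_qbinom_succ (n k : ℕ) :
    (1 - q ^ (k + 1)) * qbinom n (k + 1) q = (1 - q ^ (n - k)) * qbinom n k q := by
  linear_combination qbinom_succ_succ q n k - qbinom_succ_succ' q n k

theorem prod_one_sub_pow_mul_qbinom (n k : ℕ) :
    (∏ i ∈ range k, (1 - q ^ (i + 1))) * qbinom n k q = ∏ i ∈ range k, (1 - q ^ (n - i)) := by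
  induction k with
  | zero => simp [qbinom_zero_right]
  | succ k ih =>
    rw [prod_range_succ, prod_range_succ, ← ih, mul_assoc, one_sub_pow_mul_qbinom_succ]
    ring

theorem prod_one_sub_pow_mul_eq_sum (N : ℕ) (t : ℂ) :
    ∏ i ∈ range N, (1 - q ^ i * t) =
      ∑ j ∈ range (N + 1), (-1) ^ j * q ^ j.choose 2 * qbinom N j q * t ^ j := by
  induction N generalizing t with
  | zero => simp [qbinom_zero_right]
  | succ N ih =>
    have hshift : ∏ i ∈ range (N + 1), (1 - q ^ i * t) =
        (1 - t) * ∏ i ∈ range N, (1 - q ^ i * (q * t)) := by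
      rw [prod_range_succ', mul_comm]
      simp [pow_succ, mul_assoc]
    set g : ℕ → ℂ := fun j => (-1) ^ j * q ^ j.choose 2 * qbinom N j q * (q * t) ^ j with hg
    have hterm (j : ℕ) : (-1) ^ (j + 1) * q ^ (j + 1).choose 2 * qbinom (N + 1) (j + 1) q *
        t ^ (j + 1) = -t * g j + g (j + 1) := by
      simp only [hg]
      rw [Nat.choose_succ_succ', Nat.choose_one_right, qbinom_succ_succ]
      ring
    have htop : g (N + 1) = 0 := by simp [hg, qbinom_eq_zero_of_lt]
    rw [hshift, ih, sum_range_succ' _ (N + 1), sum_congr rfl fun j _ => hterm j, sum_add_distrib,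
      ← mul_sum, add_assoc]
    have hg0 : g 0 = (-1) ^ 0 * q ^ Nat.choose 0 2 * qbinom (N + 1) 0 q * t ^ 0 := by
      simp [hg, qbinom_zero_right]
    rw [← hg0, ← sum_range_succ' g, sum_range_succ g (N + 1), htop]
    ring

end QBinomial

section RootOfUnity

variable {ζ : ℂ} {p : ℕ}

theorem prod_one_sub_pow_succ_ne_zero (hζ : IsPrimitiveRoot ζ p) {k : ℕ} (hk : k < p) :
    ∏ i ∈ range k, (1 - ζ ^ (i + 1)) ≠ 0 :=
  prod_ne_zero_iff.mpr fun i hi => sub_ne_zero.mpr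
    (hζ.pow_ne_one_of_pos_of_lt i.succ_ne_zero (by rw [mem_range] at hi; omega)).symm

theorem qbinom_eq_zero_of_isPrimitiveRoot (hζ : IsPrimitiveRoot ζ p) {n k : ℕ} (hk : k < p)
    (hpn : p ≤ n) (hnk : n < p + k) : qbinom n k ζ = 0 := by
  have h := prod_one_sub_pow_mul_qbinom ζ n k
  rw [prod_eq_zero (f := fun i => 1 - ζ ^ (n - i)) (mem_range.mpr (show n - p < k by omega))
    (by rw [Nat.sub_sub_self hpn, hζ.pow_eq_one, sub_self])] at h
  exact (mul_eq_zero.mp h).resolve_left (prod_one_sub_pow_succ_ne_zero hζ hk)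

theorem qbinom_add_eq_one_of_isPrimitiveRoot (hζ : IsPrimitiveRoot ζ p) {k : ℕ} (hk : k < p) :
    qbinom (p + k) k ζ = 1 := by
  have h := prod_one_sub_pow_mul_qbinom ζ (p + k) k
  have hreflect : ∏ i ∈ range k, (1 - ζ ^ (p + k - i)) = ∏ i ∈ range k, (1 - ζ ^ (i + 1)) := by
    rw [← prod_range_reflect (fun i => 1 - ζ ^ (i + 1)) k]
    refine prod_congr rfl fun i hi => ?_
    rw [mem_range] at hi
    rw [show p + k - i = p + (k - 1 - i + 1) by omega, pow_add, hζ.pow_eq_one, one_mul]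
  rw [hreflect] at h
  exact mul_left_cancel₀ (prod_one_sub_pow_succ_ne_zero hζ hk) (h.trans (mul_one _).symm)

theorem sum_range_mul_pow_zpow {ω : ℂ} (hω : IsPrimitiveRoot ω p) (c : ℂ) (d : ℤ) :
    ∑ n ∈ range p, (c * ω ^ n) ^ d = if (p : ℤ) ∣ d then p * c ^ d else 0 := by
  have hpow (n : ℕ) : (c * ω ^ n) ^ d = c ^ d * (ω ^ d) ^ n := by
    rw [mul_zpow, ← zpow_natCast ω n, ← zpow_mul, ← zpow_natCast (ω ^ d), ← zpow_mul,
      mul_comm (n : ℤ)]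
  simp_rw [hpow, ← mul_sum]
  split_ifs with h
  · simp [(hω.zpow_eq_one_iff_dvd d).mpr h, mul_comm]
  · have hωp : (ω ^ d) ^ p = 1 := by
      rw [← zpow_natCast, ← zpow_mul, mul_comm, zpow_mul, zpow_natCast, hω.pow_eq_one, one_zpow]
    rw [geom_sum_eq (mt (hω.zpow_eq_one_iff_dvd d).mp h), hωp, sub_self, zero_div, mul_zero]

end RootOfUnity

theorem sub_two_mul_sigma'_eq_prod {ζ x : ℂ} (hζ : ζ ≠ 0) (hx : x ≠ 0) (m : ℕ) :
    (x + x⁻¹ - 2) * sigma' m x ζ =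
      x ^ m * (x - 1) * ∏ j ∈ range (2 * m + 1), (1 - ζ ^ j * (ζ ^ m * x)⁻¹) := by
  set t := (ζ ^ m * x)⁻¹
  have hsigma : (x + x⁻¹ - 2) * sigma' m x ζ =
      ∏ i ∈ range (m + 1), (x + x⁻¹ - ζ ^ i - (ζ ^ i)⁻¹) := by
    rw [sigma', ← Ico_add_one_right_eq_Icc, prod_Ico_eq_prod_range, prod_range_succ']
    simp only [add_comm 1, add_tsub_cancel_right, pow_zero, inv_one]
    ring
  have hfactor : ∀ i ∈ range (m + 1),
      x + x⁻¹ - ζ ^ i - (ζ ^ i)⁻¹ = x * ((1 - ζ ^ (m + i) * t) * (1 - ζ ^ (m - i) * t)) := by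
    intro i hi
    rw [mem_range] at hi
    rw [pow_add, pow_sub₀ ζ hζ (by omega)]
    simp only [t]
    field_simp
    ring
  have hreflect :
      ∏ i ∈ range (m + 1), (1 - ζ ^ (m - i) * t) = ∏ i ∈ range (m + 1), (1 - ζ ^ i * t) := by
    simpa using prod_range_reflect (fun i => 1 - ζ ^ i * t) (m + 1)
  have hsplit : ∏ j ∈ range (2 * m + 1), (1 - ζ ^ j * t) =
      (∏ j ∈ range m, (1 - ζ ^ j * t)) * ∏ i ∈ range (m + 1), (1 - ζ ^ (m + i) * t) := by
    rw [show 2 * m + 1 = m + (m + 1) by ring, prod_range_add]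
  have hlast : x ^ (m + 1) * (1 - ζ ^ m * t) = x ^ m * (x - 1) := by
    simp only [t]
    field_simp
    ring
  rw [hsigma, prod_congr rfl hfactor, prod_mul_distrib, prod_mul_distrib, prod_const, card_range,
    hreflect, prod_range_succ (fun i => 1 - ζ ^ i * t) m, hsplit, ← hlast]
  ring

noncomputable def sigmaCoeff (ζ : ℂ) (m j : ℕ) : ℂ :=
  (-1) ^ j * ζ ^ ((j.choose 2 : ℤ) - m * j) * qbinom (2 * m + 1) j ζ

theorem sub_two_mul_sigma'_eq_sum {ζ x : ℂ} (hζ : ζ ≠ 0) (hx : x ≠ 0) (m : ℕ) :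
    (x + x⁻¹ - 2) * sigma' m x ζ =
      ∑ j ∈ range (2 * m + 2), sigmaCoeff ζ m j * (x ^ ((m : ℤ) + 1 - j) - x ^ ((m : ℤ) - j)) := by
  rw [sub_two_mul_sigma'_eq_prod hζ hx, prod_one_sub_pow_mul_eq_sum, mul_sum]
  refine sum_congr rfl fun j _ => ?_
  have hx' : x ^ ((m : ℤ) + 1 - j) - x ^ ((m : ℤ) - j) = x ^ m * (x - 1) / x ^ j := by
    rw [zpow_sub₀ hx, zpow_sub₀ hx, zpow_add_one₀ hx, zpow_natCast, zpow_natCast]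
    ring
  rw [sigmaCoeff, hx', zpow_sub₀ hζ, zpow_natCast, ← Nat.cast_mul, zpow_natCast]
  simp only [mul_inv, mul_pow, inv_pow, ← pow_mul]
  field_simp

theorem sigmaCoeff_zero_right (ζ : ℂ) (m : ℕ) : sigmaCoeff ζ m 0 = 1 := by
  simp [sigmaCoeff, qbinom_zero_right]

theorem sigmaCoeff_succ_self (ζ : ℂ) (m : ℕ) : sigmaCoeff ζ m (m + 1) = -sigmaCoeff ζ m m := by
  have hsymm : qbinom (2 * m + 1) (m + 1) ζ = qbinom (2 * m + 1) m ζ := by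
    rw [← qbinom_symm ζ (show m ≤ 2 * m + 1 by omega), show 2 * m + 1 - m = m + 1 by omega]
  have hexp : (((m + 1).choose 2 : ℕ) : ℤ) - m * (m + 1 : ℕ) = (m.choose 2 : ℕ) - m * m := by
    rw [Nat.choose_succ_succ', Nat.choose_one_right]
    push_cast
    ring
  rw [sigmaCoeff, sigmaCoeff, hsymm, hexp, pow_succ]
  ring

theorem sigmaCoeff_last (ζ : ℂ) (m : ℕ) : sigmaCoeff ζ m (2 * m + 1) = -1 := by
  have hchoose : (2 * m + 1).choose 2 = m * (2 * m + 1) := by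
    rw [Nat.choose_two_right, Nat.add_sub_cancel, Nat.div_eq_of_eq_mul_left two_pos]
    ring
  simp [sigmaCoeff, hchoose, qbinom_self, pow_succ, pow_mul]

theorem sigmaCoeff_self_of_isPrimitiveRoot {ζ : ℂ} {m : ℕ} (hζ : IsPrimitiveRoot ζ (m + 1))
    (hm : Even m) : sigmaCoeff ζ m m = 1 := by
  have hdvd : ((m + 1 : ℕ) : ℤ) ∣ (m.choose 2 : ℤ) - m * m := by
    obtain ⟨k, rfl⟩ := hm
    have hchoose : (((k + k).choose 2 : ℕ) : ℚ) * 2 = (k + k : ℕ) * ((k + k : ℕ) - 1) := by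
      rw [Nat.cast_choose_two]
      ring
    have hchoose' : (((k + k).choose 2 : ℕ) : ℤ) * 2 = (k + k : ℕ) * ((k + k : ℕ) - 1) := by
      exact_mod_cast hchoose
    refine (mul_dvd_mul_iff_left (two_ne_zero (α := ℤ))).mp ⟨-k, ?_⟩
    push_cast at hchoose' ⊢
    linear_combination hchoose'
  rw [sigmaCoeff, (hζ.zpow_eq_one_iff_dvd _).mpr hdvd, hm.neg_one_pow,
    show 2 * m + 1 = m + 1 + m by ring, qbinom_add_eq_one_of_isPrimitiveRoot hζ m.lt_succ_self]
  ring

theorem natCast_dvd_iff_of_abs_le {p : ℕ} {d : ℤ} (hp : 0 < p) (hd : |d| ≤ p) :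
    (p : ℤ) ∣ d ↔ d = -p ∨ d = 0 ∨ d = p := by
  constructor
  · rintro ⟨k, rfl⟩
    rw [abs_mul, Nat.abs_cast] at hd
    have hk : |k| ≤ 1 := le_of_mul_le_mul_left (by rwa [mul_one]) (by exact_mod_cast hp)
    obtain ⟨hk₁, hk₂⟩ := abs_le.mp hk
    interval_cases k <;> simp
  · rintro (h | h | h) <;> simp [h]

section Orbit

variable {ζ ω c : ℂ}

theorem sum_orbit_sub_two_mul_sigma' {p : ℕ} (hζ : ζ ≠ 0) (hω : IsPrimitiveRoot ω p) (hc : c ≠ 0)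
    {m : ℕ} (hm : m < p) :
    ∑ n ∈ range p, (c * ω ^ n + (c * ω ^ n)⁻¹ - 2) * sigma' m (c * ω ^ n) ζ =
      ∑ j ∈ range (2 * m + 2), sigmaCoeff ζ m j *
        ((if (m : ℤ) + 1 - j = -p ∨ (m : ℤ) + 1 - j = 0 ∨ (m : ℤ) + 1 - j = p
            then p * c ^ ((m : ℤ) + 1 - j) else 0) -
          (if (m : ℤ) - j = -p ∨ (m : ℤ) - j = 0 ∨ (m : ℤ) - j = p
            then p * c ^ ((m : ℤ) - j) else 0)) := by
  have hx : ∀ n ∈ range p, c * ω ^ n ≠ 0 := fun n hn =>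
    mul_ne_zero hc (pow_ne_zero _ (hω.ne_zero (by rw [mem_range] at hn; omega)))
  rw [sum_congr rfl fun n hn => sub_two_mul_sigma'_eq_sum hζ (hx n hn) m, sum_comm]
  refine sum_congr rfl fun j hj => ?_
  rw [mem_range] at hj
  rw [← mul_sum, sum_sub_distrib, sum_range_mul_pow_zpow hω, sum_range_mul_pow_zpow hω]
  simp only [natCast_dvd_iff_of_abs_le (by omega) (abs_le.mpr ⟨by omega, by omega⟩ :
      |(m : ℤ) + 1 - j| ≤ p),
    natCast_dvd_iff_of_abs_le (by omega) (abs_le.mpr ⟨by omega, by omega⟩ : |(m : ℤ) - j| ≤ p)]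

theorem sum_orbit_sub_two_mul_sigma'_of_lt {p : ℕ} (hζ : ζ ≠ 0) (hω : IsPrimitiveRoot ω p)
    (hc : c ≠ 0) {m : ℕ} (hm : m + 1 < p) :
    ∑ n ∈ range p, (c * ω ^ n + (c * ω ^ n)⁻¹ - 2) * sigma' m (c * ω ^ n) ζ =
      -2 * p * sigmaCoeff ζ m m := by
  rw [sum_orbit_sub_two_mul_sigma' hζ hω hc (by omega)]
  simp_rw [mul_sub, sum_sub_distrib]
  rw [sum_eq_single (m + 1), sum_eq_single m, if_pos (by omega), if_pos (by omega),
    sigmaCoeff_succ_self]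
  · simp only [Nat.cast_add, Nat.cast_one, sub_self, zpow_zero]
    ring
  all_goals first
    | intro j hj hne; rw [mem_range] at hj; rw [if_neg (by omega), mul_zero]
    | exact fun h => absurd (mem_range.mpr (by omega)) h

theorem sum_orbit_sub_two_mul_sigma'_top {m : ℕ} (hζ : ζ ≠ 0) (hω : IsPrimitiveRoot ω (m + 1))
    (hc : c ≠ 0) :
    ∑ n ∈ range (m + 1), (c * ω ^ n + (c * ω ^ n)⁻¹ - 2) * sigma' m (c * ω ^ n) ζ =
      (m + 1) * (c ^ (m + 1) + (c ^ (m + 1))⁻¹ - 2 * sigmaCoeff ζ m m) := by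
  rw [sum_orbit_sub_two_mul_sigma' hζ hω hc (by omega)]
  simp_rw [mul_sub, sum_sub_distrib]
  rw [sum_eq_add_of_mem 0 (m + 1), sum_eq_add_of_mem m (2 * m + 1), if_pos (by omega),
    if_pos (by omega), if_pos (by omega), if_pos (by omega), sigmaCoeff_zero_right,
    sigmaCoeff_succ_self, sigmaCoeff_last]
  · have h1 : (m : ℤ) + 1 - ((0 : ℕ) : ℤ) = ((m + 1 : ℕ) : ℤ) := by push_cast; ring
    have h2 : (m : ℤ) + 1 - ((m + 1 : ℕ) : ℤ) = 0 := by push_cast; ring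
    have h3 : (m : ℤ) - ((2 * m + 1 : ℕ) : ℤ) = -((m + 1 : ℕ) : ℤ) := by push_cast; ring
    rw [h1, h2, h3, sub_self, zpow_neg, zpow_natCast, zpow_zero]
    push_cast
    ring
  all_goals first
    | exact mem_range.mpr (by omega)
    | omega
    | intro j hj hne; rw [mem_range] at hj; rw [if_neg (by omega), mul_zero]

end Orbit

theorem epow_neg (p : ℕ) (w : ℂ) : epow p (-w) = (epow p w)⁻¹ := by
  rw [epow, epow, ← Complex.exp_neg]
  ring_nf

theorem epow_add_two_mul_add_one (p : ℕ) (w : ℂ) (n : ℕ) :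
    epow p (w + 2 * n + 1) = epow p (w + 1) * (ep p ^ 2) ^ n := by
  rw [epow, epow, ep, ← pow_mul, ← Complex.exp_nat_mul, ← Complex.exp_add]
  push_cast
  ring_nf

theorem ep_zpow (p : ℕ) (d : ℤ) : ep p ^ d = epow p d := by
  rw [ep, epow, ← Complex.exp_int_mul]
  ring_nf

theorem epow_add_one_pow {p : ℕ} (hp : p ≠ 0) (w : ℂ) :
    epow p (w + 1) ^ p = Complex.exp (2 * Real.pi * Complex.I * w) := by
  have : (p : ℂ) ≠ 0 := Nat.cast_ne_zero.mpr hp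
  rw [epow, ← Complex.exp_nat_mul, show (p : ℂ) * (2 * Real.pi * Complex.I * (w + 1) / p) =
    2 * Real.pi * Complex.I * w + 2 * Real.pi * Complex.I by field_simp, Complex.exp_add,
    Complex.exp_two_pi_mul_I, mul_one]

theorem sigmaCoeff_ep_self (p m : ℕ) :
    sigmaCoeff (ep p) m m =
      (-1) ^ m * qbinom (2 * m + 1) m (ep p) * epow p (-((m : ℂ) * (m + 1)) / 2) := by
  have hexp : (((m.choose 2 : ℤ) - m * m : ℤ) : ℂ) = -((m : ℂ) * (m + 1)) / 2 := by
    push_cast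
    rw [Nat.cast_choose_two]
    ring
  rw [sigmaCoeff, ep_zpow, hexp]
  ring

theorem stmt12 (p : ℕ) (hp : 3 ≤ p) (hodd : Odd p) (lam : ℂ) (a : ℕ → ℂ) :
    ∑ m ∈ Finset.range p, a m *
        ∑ n ∈ Finset.range p,
          (epow p (lam + 2 * n + 1) + epow p (-(lam + 2 * n + 1)) - 2) *
            sigma' m (epow p (lam + 2 * n + 1)) (ep p) =
      -2 * p * (∑ m ∈ Finset.range ((p - 3) / 2 + 1),
          (-1) ^ m * a m * qbinom (2 * m + 1) m (ep p) * epow p (-((m : ℂ) * (m + 1)) / 2)) +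
        (p : ℂ) * a (p - 1) * (Complex.exp (2 * Real.pi * Complex.I * lam) +
          Complex.exp (-(2 * Real.pi * Complex.I * lam)) - 2) := by
  obtain ⟨k, rfl⟩ := hodd
  have hζ : IsPrimitiveRoot (ep (2 * k + 1)) (2 * k + 1) :=
    Complex.isPrimitiveRoot_exp _ (2 * k).succ_ne_zero
  have hω : IsPrimitiveRoot (ep (2 * k + 1) ^ 2) (2 * k + 1) :=
    hζ.pow_of_coprime 2 (Nat.coprime_two_left.mpr (odd_two_mul_add_one k))
  have hζ₀ : ep (2 * k + 1) ≠ 0 := Complex.exp_ne_zero _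
  have hc : epow (2 * k + 1) (lam + 1) ≠ 0 := Complex.exp_ne_zero _
  rw [show (2 * k + 1 - 3) / 2 + 1 = k by omega, Nat.add_sub_cancel]
  simp_rw [epow_neg, epow_add_two_mul_add_one]
  rw [sum_range_succ, sum_orbit_sub_two_mul_sigma'_top hζ₀ hω hc,
    sigmaCoeff_self_of_isPrimitiveRoot hζ (even_two_mul k),
    epow_add_one_pow (2 * k).succ_ne_zero,
    sum_congr rfl fun m hm => by
      rw [sum_orbit_sub_two_mul_sigma'_of_lt hζ₀ hω hc (by rw [mem_range] at hm; omega),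
        sigmaCoeff_ep_self]]
  rw [← sum_subset (range_subset_range.mpr (show k ≤ 2 * k by omega)) fun m hm hm' => ?_]
  · rw [mul_sum, ← Complex.exp_neg]
    push_cast
    congr 1
    · exact sum_congr rfl fun m _ => by ring
    · ring
  · rw [mem_range] at hm hm'
    rw [qbinom_eq_zero_of_isPrimitiveRoot hζ (by omega) (by omega) (by omega)]
    ring
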